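/- arXiv:2310.00502 — 6 statements merged into one kernel-verified Lean document; each statement's English description precedes it below -/
import Mathlib

section
/- Let F : C → D be a semifunctor and suppose F ⊣ₛ G and F ⊣ₛ G' are two semiadjunctions, with units η, η' and counits ε, ε' respectively. Then G and G' are naturally semi-isomorphic; explicitly, γ with components γ_D = G'(ε_D) ∘ η'_{GD} and γ' with components γ'_D = G(ε'_D) ∘ η_{G'D} are seminatural transformations satisfying γ' ∘ γ = G(Id) and γ ∘ γ' = G'(Id) componentwise. -/
open CategoryTheory

universe v₁ v₂ v₃ v₄ u₁ u₂ u₃ u₄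

/-- A semifunctor between categories: it preserves composition of morphisms
but not necessarily identities. -/
structure Semifunctor (C : Type u₁) (D : Type u₂) [Category.{v₁} C] [Category.{v₂} D] where
  obj : C → D
  map : ∀ {X Y : C}, (X ⟶ Y) → (obj X ⟶ obj Y)
  map_comp : ∀ {X Y Z : C} (f : X ⟶ Y) (g : Y ⟶ Z), map (f ≫ g) = map f ≫ map g

namespace Semifunctor

variable {C : Type u₁} {D : Type u₂} {E : Type u₃} {C' : Type u₄}
variable [Category.{v₁} C] [Category.{v₂} D] [Category.{v₃} E] [Category.{v₄} C']

/-- Composition of semifunctors, in diagrammatic order: `F.comp G = G ∘ F`. -/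
def comp (F : Semifunctor C D) (G : Semifunctor D E) : Semifunctor C E where
  obj X := G.obj (F.obj X)
  map f := G.map (F.map f)
  map_comp f g := by
    show G.map (F.map (f ≫ g)) = G.map (F.map f) ≫ G.map (F.map g)
    rw [F.map_comp, G.map_comp]

/-- `α` is a natural transformation between the semifunctors `F` and `F'`:
`α_Y ∘ F(f) = F'(f) ∘ α_X` for every `f : X ⟶ Y`. -/
def IsNatural {F F' : Semifunctor C D} (α : ∀ X : C, F.obj X ⟶ F'.obj X) : Prop :=
  ∀ ⦃X Y : C⦄ (f : X ⟶ Y), F.map f ≫ α Y = α X ≫ F'.map f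

/-- `α` is a seminatural transformation: natural and `α_X ∘ F(Id_X) = α_X`. -/
def IsSeminatural {F F' : Semifunctor C D} (α : ∀ X : C, F.obj X ⟶ F'.obj X) : Prop :=
  IsNatural α ∧ ∀ X : C, F.map (𝟙 X) ≫ α X = α X

/-- A semifunctor is faithful if all its hom-maps are injective. -/
def Faithful (F : Semifunctor C D) : Prop :=
  ∀ ⦃X Y : C⦄ (f g : X ⟶ Y), F.map f = F.map g → f = g

/-- A semifunctor is full if all its hom-maps are surjective. -/
def Full (F : Semifunctor C D) : Prop :=
  ∀ ⦃X Y : C⦄ (g : F.obj X ⟶ F.obj Y), ∃ f : X ⟶ Y, F.map f = g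

/-- A semifunctor is semifull if for every `f : FX ⟶ FY` there is `g : X ⟶ Y`
with `F(g) = F(Id_Y) ∘ f ∘ F(Id_X)`. -/
def Semifull (F : Semifunctor C D) : Prop :=
  ∀ ⦃X Y : C⦄ (f : F.obj X ⟶ F.obj Y), ∃ g : X ⟶ Y,
    F.map g = F.map (𝟙 X) ≫ f ≫ F.map (𝟙 Y)

/-- A semifunctor is semifully faithful if it is faithful and semifull. -/
def SemifullyFaithful (F : Semifunctor C D) : Prop :=
  F.Faithful ∧ F.Semifull

/-- `P` is a natural transformation `Hom_D(F-,F-) → Hom_C(-,-)`. -/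
def IsHomNatural (F : Semifunctor C D)
    (P : ∀ X Y : C, (F.obj X ⟶ F.obj Y) → (X ⟶ Y)) : Prop :=
  ∀ (X Y Z T : C) (h : X ⟶ Y) (k : F.obj Y ⟶ F.obj Z) (l : Z ⟶ T),
    P X T (F.map h ≫ k ≫ F.map l) = h ≫ P Y Z k ≫ l

/-- A semifunctor is separable if the associated natural transformation `ℱ` has a
natural retraction `P` : `P(F(f)) = f`. -/
def Separable (F : Semifunctor C D) : Prop :=
  ∃ P : ∀ X Y : C, (F.obj X ⟶ F.obj Y) → (X ⟶ Y),
    F.IsHomNatural P ∧ ∀ (X Y : C) (f : X ⟶ Y), P X Y (F.map f) = f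

/-- A semifunctor is naturally semifull if there is a natural `P` with
`F(P(f)) = F(Id_Y) ∘ f ∘ F(Id_X)` for all `f : FX ⟶ FY`. -/
def NaturallySemifull (F : Semifunctor C D) : Prop :=
  ∃ P : ∀ X Y : C, (F.obj X ⟶ F.obj Y) → (X ⟶ Y),
    F.IsHomNatural P ∧
    ∀ (X Y : C) (f : F.obj X ⟶ F.obj Y),
      F.map (P X Y f) = F.map (𝟙 X) ≫ f ≫ F.map (𝟙 Y)

/-- A semifunctor is semiseparable if there is a natural `P` with
`F(P(F(f))) = F(f)` for all `f : X ⟶ Y`. -/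
def Semiseparable (F : Semifunctor C D) : Prop :=
  ∃ P : ∀ X Y : C, (F.obj X ⟶ F.obj Y) → (X ⟶ Y),
    F.IsHomNatural P ∧
    ∀ (X Y : C) (f : X ⟶ Y), F.map (P X Y (F.map f)) = F.map f

/-- `f : FC ⟶ F'C'` is an `(F_C, F'_{C'})`-semisplit-mono. -/
def IsSemisplitMonoAt (F : Semifunctor C D) (F' : Semifunctor C' D) (c : C) (c' : C')
    (f : F.obj c ⟶ F'.obj c') : Prop :=
  F.map (𝟙 c) ≫ f = f ∧ ∃ g : F'.obj c' ⟶ F.obj c,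
    f ≫ g = F.map (𝟙 c) ∧ F'.map (𝟙 c') ≫ g = g

/-- `f : FC ⟶ F'C'` is an `(F_C, F'_{C'})`-semisplit-epi. -/
def IsSemisplitEpiAt (F : Semifunctor C D) (F' : Semifunctor C' D) (c : C) (c' : C')
    (f : F.obj c ⟶ F'.obj c') : Prop :=
  f ≫ F'.map (𝟙 c') = f ∧ ∃ g : F'.obj c' ⟶ F.obj c,
    g ≫ f = F'.map (𝟙 c') ∧ g ≫ F.map (𝟙 c) = g

/-- `f : FC ⟶ F'C'` is an `(F_C, F'_{C'})`-semi-isomorphism. -/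
def IsSemiIsoAt (F : Semifunctor C D) (F' : Semifunctor C' D) (c : C) (c' : C')
    (f : F.obj c ⟶ F'.obj c') : Prop :=
  F.map (𝟙 c) ≫ f = f ∧ ∃ g : F'.obj c' ⟶ F.obj c,
    f ≫ g = F.map (𝟙 c) ∧ g ≫ f = F'.map (𝟙 c')

end Semifunctor

open Semifunctor

/-- A semiadjunction `F ⊣ₛ G`: seminatural unit and counit satisfying the
semitriangular identities `G(ε) ∘ ηG = G(Id)` and `εF ∘ F(η) = F(Id)`. -/
structure Semiadjunction {C : Type u₁} {D : Type u₂} [Category.{v₁} C] [Category.{v₂} D]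
    (F : Semifunctor C D) (G : Semifunctor D C) where
  unit : ∀ X : C, X ⟶ G.obj (F.obj X)
  counit : ∀ Y : D, F.obj (G.obj Y) ⟶ Y
  unit_natural : ∀ ⦃X Y : C⦄ (f : X ⟶ Y), f ≫ unit Y = unit X ≫ G.map (F.map f)
  counit_natural : ∀ ⦃X Y : D⦄ (g : X ⟶ Y), F.map (G.map g) ≫ counit Y = counit X ≫ g
  right_triangle : ∀ Y : D, unit (G.obj Y) ≫ G.map (counit Y) = G.map (𝟙 Y)
  left_triangle : ∀ X : C, F.map (unit X) ≫ counit (F.obj X) = F.map (𝟙 X)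

/-- The canonical semifunctor `E^e` attached to an idempotent seminatural
transformation `e : Id_C → Id_C`: identity on objects, `f ↦ f ∘ e_X = e_Y ∘ f`. -/
def canonicalSemifunctor {C : Type u₁} [Category.{v₁} C] (e : ∀ X : C, X ⟶ X)
    (hnat : ∀ ⦃X Y : C⦄ (f : X ⟶ Y), f ≫ e Y = e X ≫ f)
    (hid : ∀ X : C, e X ≫ e X = e X) : Semifunctor C C where
  obj X := X
  map {X Y} f := e X ≫ f
  map_comp {X Y Z} f g := by
    show e X ≫ f ≫ g = (e X ≫ f) ≫ e Y ≫ g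
    calc e X ≫ f ≫ g = (e X ≫ e X) ≫ f ≫ g := by rw [hid]
      _ = e X ≫ (e X ≫ f) ≫ g := by simp only [Category.assoc]
      _ = e X ≫ (f ≫ e Y) ≫ g := by rw [← hnat f]
      _ = (e X ≫ f) ≫ e Y ≫ g := by simp only [Category.assoc]


/-
The comparison maps are the usual mates: `γ = G'ε ∘ η'G` and `γ' = Gε' ∘ ηG'`.
In `γ' ∘ γ`, naturality of `η` and `ε'` moves the two units next to each other and
the two counits next to each other; the left semitriangle of `F ⊣ₛ G'` then cancels
`η'` against `ε'` up to `F(Id)`, which `η` absorbs, and the right semitriangle of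
`F ⊣ₛ G` leaves `G(Id)`. Seminaturality only needs the naturality squares at `Id`.
-/

namespace Semifunctor

variable {C : Type u₁} {D : Type u₂} [Category.{v₁} C] [Category.{v₂} D]

theorem IsNatural.isSeminatural {F F' : Semifunctor C D} {α : ∀ X : C, F.obj X ⟶ F'.obj X}
    (hα : IsNatural α) (hid : ∀ X : C, α X ≫ F'.map (𝟙 X) = α X) : IsSeminatural α :=
  ⟨hα, fun X => (hα (𝟙 X)).trans (hid X)⟩

end Semifunctor

namespace Semiadjunction

variable {C : Type u₁} {D : Type u₂} [Category.{v₁} C] [Category.{v₂} D]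
variable {F : Semifunctor C D} {G G' : Semifunctor D C}

def comparison (adj : Semiadjunction F G) (adj' : Semiadjunction F G') (Y : D) :
    G.obj Y ⟶ G'.obj Y :=
  adj'.unit (G.obj Y) ≫ G'.map (adj.counit Y)

theorem unit_comp_map_map_id (adj : Semiadjunction F G) (X : C) :
    adj.unit X ≫ G.map (F.map (𝟙 X)) = adj.unit X := by
  rw [← adj.unit_natural, Category.id_comp]

theorem unit_comp_unit_comp_map_counit (adj : Semiadjunction F G)
    (adj' : Semiadjunction F G') (X : C) :
    adj'.unit X ≫ adj.unit (G'.obj (F.obj X)) ≫ G.map (adj'.counit (F.obj X)) =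
      adj.unit X := by
  rw [← Category.assoc, adj.unit_natural, Category.assoc, ← G.map_comp,
    adj'.left_triangle, unit_comp_map_map_id]

theorem comparison_isNatural (adj : Semiadjunction F G) (adj' : Semiadjunction F G') :
    IsNatural (comparison adj adj') := by
  intro X Y g
  simp only [comparison]
  rw [← Category.assoc, adj'.unit_natural, Category.assoc, ← G'.map_comp,
    adj.counit_natural, G'.map_comp, Category.assoc]

theorem comparison_isSeminatural (adj : Semiadjunction F G) (adj' : Semiadjunction F G') :
    IsSeminatural (comparison adj adj') :=
  (comparison_isNatural adj adj').isSeminatural fun Y => by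
    rw [comparison, Category.assoc, ← G'.map_comp, Category.comp_id]

theorem comparison_comp_comparison (adj : Semiadjunction F G) (adj' : Semiadjunction F G')
    (Y : D) : comparison adj adj' Y ≫ comparison adj' adj Y = G.map (𝟙 Y) := by
  calc comparison adj adj' Y ≫ comparison adj' adj Y
      = adj'.unit (G.obj Y) ≫ (G'.map (adj.counit Y) ≫ adj.unit (G'.obj Y)) ≫
          G.map (adj'.counit Y) := by simp only [comparison, Category.assoc]
    _ = adj'.unit (G.obj Y) ≫ adj.unit (G'.obj (F.obj (G.obj Y))) ≫
          G.map (F.map (G'.map (adj.counit Y)) ≫ adj'.counit Y) := by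
        rw [adj.unit_natural, G.map_comp, Category.assoc]
    _ = (adj'.unit (G.obj Y) ≫ adj.unit (G'.obj (F.obj (G.obj Y))) ≫
          G.map (adj'.counit (F.obj (G.obj Y)))) ≫ G.map (adj.counit Y) := by
        rw [adj'.counit_natural, G.map_comp]
        simp only [Category.assoc]
    _ = G.map (𝟙 Y) := by
        rw [unit_comp_unit_comp_map_counit, adj.right_triangle]

end Semiadjunction

/-- Semiadjoints are unique up to natural semi-isomorphism: given semiadjunctions
`F ⊣ₛ G` and `F ⊣ₛ G'`, the canonical comparison transformations
`γ_D = G'(ε_D) ∘ η'_{GD}` and `γ'_D = G(ε'_D) ∘ η_{G'D}` are seminatural and satisfy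
`γ' ∘ γ = G(Id)` and `γ ∘ γ' = G'(Id)` componentwise. -/
theorem semiadjoint_unique_up_to_natural_semiIso
    {C : Type u₁} {D : Type u₂} [Category.{v₁} C] [Category.{v₂} D]
    {F : Semifunctor C D} {G G' : Semifunctor D C}
    (adj : Semiadjunction F G) (adj' : Semiadjunction F G') :
    Semifunctor.IsSeminatural
      (fun Y : D => adj'.unit (G.obj Y) ≫ G'.map (adj.counit Y)) ∧
    Semifunctor.IsSeminatural
      (fun Y : D => adj.unit (G'.obj Y) ≫ G.map (adj'.counit Y)) ∧
    (∀ Y : D, (adj'.unit (G.obj Y) ≫ G'.map (adj.counit Y)) ≫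
        (adj.unit (G'.obj Y) ≫ G.map (adj'.counit Y)) = G.map (𝟙 Y)) ∧
    (∀ Y : D, (adj.unit (G'.obj Y) ≫ G.map (adj'.counit Y)) ≫
        (adj'.unit (G.obj Y) ≫ G'.map (adj.counit Y)) = G'.map (𝟙 Y)) :=
  ⟨adj.comparison_isSeminatural adj', adj'.comparison_isSeminatural adj,
    adj.comparison_comp_comparison adj', adj'.comparison_comp_comparison adj⟩
end

section
/- A semifunctor G : D → C is a right semiadjoint (i.e., there exist a semifunctor F : C → D and seminatural transformations η : Id_C → GF and ε : FG → Id_D such that G(ε_D) ∘ η_{GD} = G(Id_D) for all D) if and only if there exists a semifunctor F' : C → D such that F' ⊣ₛ G is a semiadjunction. Dually, a semifunctor F : C → D is a left semiadjoint (i.e., there exist a semifunctor G : D → C and seminatural transformations η : Id_C → GF and ε : FG → Id_D such that ε_{FC} ∘ F(η_C) = F(Id_C) for all C) if and only if there exists a semifunctor G' : D → C such that F ⊣ₛ G' is a semiadjunction. -/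
open CategoryTheory

universe v₁ v₂ v₃ v₄ u₁ u₂ u₃ u₄

open Semifunctor

/-- `G : D → C` is a right semiadjoint: there exist a semifunctor `F : C → D` and
seminatural transformations `η : Id_C → GF`, `ε : FG → Id_D` with
`G(ε_D) ∘ η_{GD} = G(Id_D)` for all `D`. -/
def Semifunctor.IsRightSemiadjoint {C : Type u₁} {D : Type u₂}
    [Category.{v₁} C] [Category.{v₂} D] (G : Semifunctor D C) : Prop :=
  ∃ (F : Semifunctor C D) (η : ∀ X : C, X ⟶ G.obj (F.obj X))
    (ε : ∀ Y : D, F.obj (G.obj Y) ⟶ Y),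
    (∀ ⦃X Y : C⦄ (f : X ⟶ Y), f ≫ η Y = η X ≫ G.map (F.map f)) ∧
    (∀ ⦃X Y : D⦄ (g : X ⟶ Y), F.map (G.map g) ≫ ε Y = ε X ≫ g) ∧
    (∀ Y : D, F.map (G.map (𝟙 Y)) ≫ ε Y = ε Y) ∧
    (∀ Y : D, η (G.obj Y) ≫ G.map (ε Y) = G.map (𝟙 Y))

/-- `F : C → D` is a left semiadjoint: there exist a semifunctor `G : D → C` and
seminatural transformations `η : Id_C → GF`, `ε : FG → Id_D` with
`ε_{FC} ∘ F(η_C) = F(Id_C)` for all `C`. -/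
def Semifunctor.IsLeftSemiadjoint {C : Type u₁} {D : Type u₂}
    [Category.{v₁} C] [Category.{v₂} D] (F : Semifunctor C D) : Prop :=
  ∃ (G : Semifunctor D C) (η : ∀ X : C, X ⟶ G.obj (F.obj X))
    (ε : ∀ Y : D, F.obj (G.obj Y) ⟶ Y),
    (∀ ⦃X Y : C⦄ (f : X ⟶ Y), f ≫ η Y = η X ≫ G.map (F.map f)) ∧
    (∀ ⦃X Y : D⦄ (g : X ⟶ Y), F.map (G.map g) ≫ ε Y = ε X ≫ g) ∧
    (∀ Y : D, F.map (G.map (𝟙 Y)) ≫ ε Y = ε Y) ∧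
    (∀ X : C, F.map (η X) ≫ ε (F.obj X) = F.map (𝟙 X))

namespace Semifunctor

variable {C : Type u₁} {D : Type u₂} [Category.{v₁} C] [Category.{v₂} D]

theorem map_comp_assoc (F : Semifunctor C D) {X Y Z : C} {W : D} (f : X ⟶ Y) (g : Y ⟶ Z)
    (h : F.obj Z ⟶ W) : F.map (f ≫ g) ≫ h = F.map f ≫ F.map g ≫ h := by
  rw [F.map_comp, Category.assoc]

def cutDown (F : Semifunctor C D) (t : ∀ X : C, F.obj X ⟶ F.obj X) (ht : IsNatural t)
    (ht_idem : ∀ X : C, t X ≫ t X = t X) : Semifunctor C D where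
  obj := F.obj
  map {X _} f := t X ≫ F.map f
  map_comp {X _ _} f g := by
    simp only [F.map_comp, Category.assoc, reassoc_of% (ht f), reassoc_of% (ht_idem X)]

end Semifunctor

namespace Semiadjunction

variable {C : Type u₁} {D : Type u₂} [Category.{v₁} C] [Category.{v₂} D]
variable {F : Semifunctor C D} {G : Semifunctor D C}

theorem map_map_id_comp_counit (adj : Semiadjunction F G) (Y : D) :
    F.map (G.map (𝟙 Y)) ≫ adj.counit Y = adj.counit Y := by
  simpa using adj.counit_natural (𝟙 Y)

theorem isRightSemiadjoint (adj : Semiadjunction F G) : G.IsRightSemiadjoint :=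
  ⟨F, adj.unit, adj.counit, adj.unit_natural, adj.counit_natural,
    adj.map_map_id_comp_counit, adj.right_triangle⟩

theorem isLeftSemiadjoint (adj : Semiadjunction F G) : F.IsLeftSemiadjoint :=
  ⟨G, adj.unit, adj.counit, adj.unit_natural, adj.counit_natural,
    adj.map_map_id_comp_counit, adj.left_triangle⟩

variable (η : ∀ X : C, X ⟶ G.obj (F.obj X)) (ε : ∀ Y : D, F.obj (G.obj Y) ⟶ Y)

section RightTriangle

theorem isNatural_map_unit_comp_counit
    (hη : ∀ ⦃X Y : C⦄ (f : X ⟶ Y), f ≫ η Y = η X ≫ G.map (F.map f))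
    (hε : ∀ ⦃X Y : D⦄ (g : X ⟶ Y), F.map (G.map g) ≫ ε Y = ε X ≫ g) :
    IsNatural (F := F) (F' := F) fun X => F.map (η X) ≫ ε (F.obj X) := by
  intro X Y f
  rw [← F.map_comp_assoc, hη f, F.map_comp_assoc, hε, Category.assoc]

theorem unit_comp_map_map_unit_comp_counit
    (hη : ∀ ⦃X Y : C⦄ (f : X ⟶ Y), f ≫ η Y = η X ≫ G.map (F.map f))
    (hrt : ∀ Y : D, η (G.obj Y) ≫ G.map (ε Y) = G.map (𝟙 Y)) (X : C) :
    η X ≫ G.map (F.map (η X) ≫ ε (F.obj X)) = η X ≫ G.map (𝟙 (F.obj X)) := by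
  rw [G.map_comp, ← Category.assoc, ← hη, Category.assoc, hrt]

theorem map_unit_comp_counit_idem
    (hη : ∀ ⦃X Y : C⦄ (f : X ⟶ Y), f ≫ η Y = η X ≫ G.map (F.map f))
    (hε : ∀ ⦃X Y : D⦄ (g : X ⟶ Y), F.map (G.map g) ≫ ε Y = ε X ≫ g)
    (hεs : ∀ Y : D, F.map (G.map (𝟙 Y)) ≫ ε Y = ε Y)
    (hrt : ∀ Y : D, η (G.obj Y) ≫ G.map (ε Y) = G.map (𝟙 Y)) (X : C) :
    (F.map (η X) ≫ ε (F.obj X)) ≫ F.map (η X) ≫ ε (F.obj X) = F.map (η X) ≫ ε (F.obj X) := by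
  rw [Category.assoc, ← hε, ← F.map_comp_assoc,
    unit_comp_map_map_unit_comp_counit η ε hη hrt, F.map_comp_assoc, hεs]

theorem map_unit_comp_counit_comp_counit
    (hε : ∀ ⦃X Y : D⦄ (g : X ⟶ Y), F.map (G.map g) ≫ ε Y = ε X ≫ g)
    (hεs : ∀ Y : D, F.map (G.map (𝟙 Y)) ≫ ε Y = ε Y)
    (hrt : ∀ Y : D, η (G.obj Y) ≫ G.map (ε Y) = G.map (𝟙 Y)) (Y : D) :
    (F.map (η (G.obj Y)) ≫ ε (F.obj (G.obj Y))) ≫ ε Y = ε Y := by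
  rw [Category.assoc, ← hε, ← F.map_comp_assoc, hrt, hεs]

/-- A right triangle identity alone already yields a semiadjunction, after replacing the
left adjoint by its image under the idempotent `εF ∘ F(η)`. -/
def ofRightTriangle
    (hη : ∀ ⦃X Y : C⦄ (f : X ⟶ Y), f ≫ η Y = η X ≫ G.map (F.map f))
    (hε : ∀ ⦃X Y : D⦄ (g : X ⟶ Y), F.map (G.map g) ≫ ε Y = ε X ≫ g)
    (hεs : ∀ Y : D, F.map (G.map (𝟙 Y)) ≫ ε Y = ε Y)
    (hrt : ∀ Y : D, η (G.obj Y) ≫ G.map (ε Y) = G.map (𝟙 Y)) :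
    Semiadjunction (F.cutDown _ (isNatural_map_unit_comp_counit η ε hη hε)
      (map_unit_comp_counit_idem η ε hη hε hεs hrt)) G where
  unit := η
  counit := ε
  unit_natural X Y f := by
    show f ≫ η Y = η X ≫ G.map ((F.map (η X) ≫ ε (F.obj X)) ≫ F.map f)
    rw [G.map_comp, ← Category.assoc, unit_comp_map_map_unit_comp_counit η ε hη hrt,
      Category.assoc, ← G.map_comp, Category.id_comp, hη]
  counit_natural X Y g := by
    show ((F.map (η (G.obj X)) ≫ ε (F.obj (G.obj X))) ≫ F.map (G.map g)) ≫ ε Y = ε X ≫ g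
    rw [Category.assoc, hε, ← Category.assoc, map_unit_comp_counit_comp_counit η ε hε hεs hrt]
  right_triangle := hrt
  left_triangle X := by
    show ((F.map (η X) ≫ ε (F.obj X)) ≫ F.map (η X)) ≫ ε (F.obj X) =
      (F.map (η X) ≫ ε (F.obj X)) ≫ F.map (𝟙 X)
    rw [Category.assoc, map_unit_comp_counit_idem η ε hη hε hεs hrt,
      ← isNatural_map_unit_comp_counit η ε hη hε, ← F.map_comp_assoc, Category.id_comp]

end RightTriangle

section LeftTriangle

theorem isNatural_unit_comp_map_counit
    (hη : ∀ ⦃X Y : C⦄ (f : X ⟶ Y), f ≫ η Y = η X ≫ G.map (F.map f))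
    (hε : ∀ ⦃X Y : D⦄ (g : X ⟶ Y), F.map (G.map g) ≫ ε Y = ε X ≫ g) :
    IsNatural (F := G) (F' := G) fun Y => η (G.obj Y) ≫ G.map (ε Y) := by
  intro X Y g
  rw [← Category.assoc, hη, Category.assoc, ← G.map_comp, hε, G.map_comp, Category.assoc]

theorem unit_comp_unit_comp_map_counit_s2
    (hη : ∀ ⦃X Y : C⦄ (f : X ⟶ Y), f ≫ η Y = η X ≫ G.map (F.map f))
    (hlt : ∀ X : C, F.map (η X) ≫ ε (F.obj X) = F.map (𝟙 X)) (X : C) :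
    η X ≫ η (G.obj (F.obj X)) ≫ G.map (ε (F.obj X)) = η X := by
  rw [← Category.assoc, hη (η X), Category.assoc, ← G.map_comp, hlt, ← hη, Category.id_comp]

theorem unit_comp_map_counit_idem
    (hη : ∀ ⦃X Y : C⦄ (f : X ⟶ Y), f ≫ η Y = η X ≫ G.map (F.map f))
    (hε : ∀ ⦃X Y : D⦄ (g : X ⟶ Y), F.map (G.map g) ≫ ε Y = ε X ≫ g)
    (hlt : ∀ X : C, F.map (η X) ≫ ε (F.obj X) = F.map (𝟙 X)) (Y : D) :
    (η (G.obj Y) ≫ G.map (ε Y)) ≫ η (G.obj Y) ≫ G.map (ε Y) = η (G.obj Y) ≫ G.map (ε Y) := by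
  rw [Category.assoc, isNatural_unit_comp_map_counit η ε hη hε, ← Category.assoc,
    unit_comp_unit_comp_map_counit_s2 η ε hη hlt]

theorem map_unit_comp_map_counit_comp_counit
    (hε : ∀ ⦃X Y : D⦄ (g : X ⟶ Y), F.map (G.map g) ≫ ε Y = ε X ≫ g)
    (hlt : ∀ X : C, F.map (η X) ≫ ε (F.obj X) = F.map (𝟙 X)) (Y : D) :
    F.map (η (G.obj Y) ≫ G.map (ε Y)) ≫ ε Y = F.map (𝟙 (G.obj Y)) ≫ ε Y := by
  rw [F.map_comp_assoc, hε, ← Category.assoc, hlt]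

/-- Dually, a left triangle identity yields a semiadjunction after replacing the right
adjoint by its image under the idempotent `G(ε) ∘ ηG`; the counit has to be cut down
to `ε ∘ F(Id_{G-})` as well. -/
def ofLeftTriangle
    (hη : ∀ ⦃X Y : C⦄ (f : X ⟶ Y), f ≫ η Y = η X ≫ G.map (F.map f))
    (hε : ∀ ⦃X Y : D⦄ (g : X ⟶ Y), F.map (G.map g) ≫ ε Y = ε X ≫ g)
    (hlt : ∀ X : C, F.map (η X) ≫ ε (F.obj X) = F.map (𝟙 X)) :
    Semiadjunction F (G.cutDown _ (isNatural_unit_comp_map_counit η ε hη hε)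
      (unit_comp_map_counit_idem η ε hη hε hlt)) where
  unit := η
  counit Y := F.map (𝟙 (G.obj Y)) ≫ ε Y
  unit_natural X Y f := by
    show f ≫ η Y = η X ≫ (η (G.obj (F.obj X)) ≫ G.map (ε (F.obj X))) ≫ G.map (F.map f)
    rw [← Category.assoc, unit_comp_unit_comp_map_counit_s2 η ε hη hlt, hη]
  counit_natural X Y g := by
    show F.map ((η (G.obj X) ≫ G.map (ε X)) ≫ G.map g) ≫ F.map (𝟙 (G.obj Y)) ≫ ε Y =
      (F.map (𝟙 (G.obj X)) ≫ ε X) ≫ g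
    rw [← F.map_comp_assoc, Category.assoc, Category.comp_id, F.map_comp_assoc, hε,
      ← Category.assoc, map_unit_comp_map_counit_comp_counit η ε hε hlt, Category.assoc]
  right_triangle Y := by
    show η (G.obj Y) ≫ (η (G.obj (F.obj (G.obj Y))) ≫ G.map (ε (F.obj (G.obj Y)))) ≫
        G.map (F.map (𝟙 (G.obj Y)) ≫ ε Y) = (η (G.obj Y) ≫ G.map (ε Y)) ≫ G.map (𝟙 Y)
    rw [← Category.assoc, unit_comp_unit_comp_map_counit_s2 η ε hη hlt, G.map_comp,
      ← Category.assoc, ← hη, Category.id_comp, Category.assoc, ← G.map_comp, Category.comp_id]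
  left_triangle X := by
    show F.map (η X) ≫ F.map (𝟙 (G.obj (F.obj X))) ≫ ε (F.obj X) = F.map (𝟙 X)
    rw [← F.map_comp_assoc, Category.comp_id, hlt]

end LeftTriangle

end Semiadjunction

/-- A semifunctor `G` is a right semiadjoint iff there is a semifunctor `F'` with a
semiadjunction `F' ⊣ₛ G`; dually `F` is a left semiadjoint iff there is `G'` with a
semiadjunction `F ⊣ₛ G'`. -/
theorem isRightSemiadjoint_iff_and_isLeftSemiadjoint_iff
    {C : Type u₁} {D : Type u₂} [Category.{v₁} C] [Category.{v₂} D]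
    (G : Semifunctor D C) (F : Semifunctor C D) :
    (G.IsRightSemiadjoint ↔ ∃ F' : Semifunctor C D, Nonempty (Semiadjunction F' G)) ∧
    (F.IsLeftSemiadjoint ↔ ∃ G' : Semifunctor D C, Nonempty (Semiadjunction F G')) := by
  refine ⟨⟨?_, fun ⟨_, ⟨adj⟩⟩ => adj.isRightSemiadjoint⟩,
    ⟨?_, fun ⟨_, ⟨adj⟩⟩ => adj.isLeftSemiadjoint⟩⟩
  · rintro ⟨_, η, ε, hη, hε, hεs, hrt⟩
    exact ⟨_, ⟨Semiadjunction.ofRightTriangle η ε hη hε hεs hrt⟩⟩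
  · rintro ⟨_, η, ε, hη, hε, -, hlt⟩
    exact ⟨_, ⟨Semiadjunction.ofLeftTriangle η ε hη hε hlt⟩⟩
end

section
/- Given a category C, any idempotent seminatural transformation e : Id_C → Id_C defines a semifunctor E^e : C → C (acting as the identity on objects and sending f : X → Y to f ∘ e_X = e_Y ∘ f) which is self-semiadjoint: E^e ⊣ₛ E^e is a semiadjunction with unit and counit both given on components by e_X : X → X. Conversely, if a semifunctor E : C → C is self-semiadjoint via seminatural transformations η : Id_C → EE and ε : EE → Id_C with E(ε_X) ∘ η_{EX} = E(Id_X) and ε_{EX} ∘ E(η_X) = E(Id_X) for all X, then the family e_X := ε_{EX} ∘ E(η_X) : EX → EX is an idempotent seminatural transformation E → E. -/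
/-!
Since `E^e(f) = e_X ≫ f`, every naturality and semitriangular identity for unit and counit `e`
collapses to `e ≫ e = e` and the naturality of `e`. Conversely, the left semitriangular
identity says that `ε_{EX} ∘ E(η_X)` is just `E(Id_X)`, and `X ↦ E(Id_X)` is idempotent and
seminatural for every semifunctor because `E` preserves composition.
-/

open CategoryTheory

universe v₁ v₂ v₃ v₄ u₁ u₂ u₃ u₄

open Semifunctor

namespace Semifunctor

variable {C : Type u₁} {D : Type u₂} [Category.{v₁} C] [Category.{v₂} D]

theorem map_id_comp_map_id (F : Semifunctor C D) (X : C) :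
    F.map (𝟙 X) ≫ F.map (𝟙 X) = F.map (𝟙 X) := by
  rw [← F.map_comp, Category.id_comp]

theorem isSeminatural_map_id (F : Semifunctor C D) :
    IsSeminatural (F := F) (F' := F) fun X => F.map (𝟙 X) := by
  refine ⟨fun X Y f => ?_, F.map_id_comp_map_id⟩
  rw [← F.map_comp, ← F.map_comp, Category.comp_id, Category.id_comp]

end Semifunctor

def canonicalSemiadjunction {C : Type u₁} [Category.{v₁} C] (e : ∀ X : C, X ⟶ X)
    (hnat : ∀ ⦃X Y : C⦄ (f : X ⟶ Y), f ≫ e Y = e X ≫ f) (hid : ∀ X : C, e X ≫ e X = e X) :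
    Semiadjunction (canonicalSemifunctor e hnat hid) (canonicalSemifunctor e hnat hid) where
  unit := e
  counit := e
  unit_natural X Y f := by
    show f ≫ e Y = e X ≫ e X ≫ e X ≫ f
    rw [reassoc_of% (hid _), reassoc_of% (hid _), hnat f]
  counit_natural X Y g := by
    show (e X ≫ e X ≫ g) ≫ e Y = e X ≫ g
    rw [reassoc_of% (hid _), Category.assoc, hnat g, reassoc_of% (hid _)]
  right_triangle Y := by
    show e Y ≫ e Y ≫ e Y = e Y ≫ 𝟙 Y
    rw [reassoc_of% (hid _), hid, Category.comp_id]
  left_triangle X := by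
    show (e X ≫ e X) ≫ e X = e X ≫ 𝟙 X
    rw [hid, hid, Category.comp_id]

/-- Any idempotent seminatural transformation `e : Id_C → Id_C` yields the canonical
semifunctor `E^e` which is self-semiadjoint, with unit and counit given by `e`;
conversely any self-semiadjoint semifunctor `E` yields an idempotent seminatural
transformation `E → E` with components `ε_{EX} ∘ E(η_X)`. -/
theorem canonicalSemifunctor_self_semiadjoint
    {C : Type u₁} [Category.{v₁} C] :
    (∀ (e : ∀ X : C, X ⟶ X)
      (hnat : ∀ ⦃X Y : C⦄ (f : X ⟶ Y), f ≫ e Y = e X ≫ f)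
      (hid : ∀ X : C, e X ≫ e X = e X),
      ∃ adj : Semiadjunction (canonicalSemifunctor e hnat hid)
          (canonicalSemifunctor e hnat hid),
        (∀ X : C, adj.unit X = e X) ∧ (∀ X : C, adj.counit X = e X)) ∧
    (∀ (Ef : Semifunctor C C) (η : ∀ X : C, X ⟶ Ef.obj (Ef.obj X))
      (ε : ∀ X : C, Ef.obj (Ef.obj X) ⟶ X),
      (∀ ⦃X Y : C⦄ (f : X ⟶ Y), f ≫ η Y = η X ≫ Ef.map (Ef.map f)) →
      (∀ ⦃X Y : C⦄ (f : X ⟶ Y), Ef.map (Ef.map f) ≫ ε Y = ε X ≫ f) →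
      (∀ X : C, Ef.map (Ef.map (𝟙 X)) ≫ ε X = ε X) →
      (∀ X : C, η (Ef.obj X) ≫ Ef.map (ε X) = Ef.map (𝟙 X)) →
      (∀ X : C, Ef.map (η X) ≫ ε (Ef.obj X) = Ef.map (𝟙 X)) →
      Semifunctor.IsSeminatural (fun X : C => Ef.map (η X) ≫ ε (Ef.obj X)) ∧
      (∀ X : C, (Ef.map (η X) ≫ ε (Ef.obj X)) ≫ (Ef.map (η X) ≫ ε (Ef.obj X)) =
        Ef.map (η X) ≫ ε (Ef.obj X))) := by
  refine ⟨fun e hnat hid => ⟨canonicalSemiadjunction e hnat hid, fun _ => rfl, fun _ => rfl⟩, ?_⟩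
  intro Ef η ε _ _ _ _ left_triangle
  have h : (fun X => Ef.map (η X) ≫ ε (Ef.obj X)) = fun X => Ef.map (𝟙 X) := funext left_triangle
  refine ⟨by rw [h]; exact Ef.isSeminatural_map_id, fun X => ?_⟩
  rw [left_triangle, Ef.map_id_comp_map_id]
end

section
/- Let F ⊣ₛ G : D → C be a semiadjunction of semifunctors with unit η and counit ε. Then: (1) F is faithful if and only if η_C is a monomorphism in C for every object C; (2) F is semifull if and only if for every object C there exists ν_C : GFC → C with η_C ∘ ν_C = GF(Id_C); (3) G is faithful if and only if ε_D is an epimorphism in D for every object D; (4) G is semifull if and only if for every object D there exists γ_D : D → FGD with γ_D ∘ ε_D = FG(Id_D). -/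
open CategoryTheory

universe v₁ v₂ v₃ v₄ u₁ u₂ u₃ u₄

open Semifunctor

/-!
The semitriangular identities give the transposition rules
`F(η_X ≫ G f) ≫ ε_Y = F(𝟙) ≫ f` and `η_X ≫ G(F g ≫ ε_Y) = g ≫ G(𝟙)`; in particular
`F u = F(u ≫ η) ≫ ε` and `G u = η ≫ G(ε ≫ u)`, so `F` factors through postcomposition
with `η` and `G` through precomposition with `ε`, which gives the faithfulness criteria.
For semifullness, a preimage of `ε_{FX}` under `F` is the required `ν_X`, and conversely
`η_X ≫ G f ≫ ν_Y` is a semi-preimage of `f`; dually for `G`.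
-/

namespace Semifunctor

variable {C : Type u₁} {D : Type u₂} [Category.{v₁} C] [Category.{v₂} D]
  (F : Semifunctor C D)

theorem map_comp_map_id {X Y : C} (f : X ⟶ Y) : F.map f ≫ F.map (𝟙 Y) = F.map f := by
  rw [← F.map_comp, Category.comp_id]

theorem map_id_comp_map {X Y : C} (f : X ⟶ Y) : F.map (𝟙 X) ≫ F.map f = F.map f := by
  rw [← F.map_comp, Category.id_comp]

end Semifunctor

namespace Semiadjunction

variable {C : Type u₁} {D : Type u₂} [Category.{v₁} C] [Category.{v₂} D]
  {F : Semifunctor C D} {G : Semifunctor D C} (adj : Semiadjunction F G)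

theorem map_unit_comp_map_comp_counit {X : C} {Y : D} (f : F.obj X ⟶ Y) :
    F.map (adj.unit X ≫ G.map f) ≫ adj.counit Y = F.map (𝟙 X) ≫ f := by
  rw [F.map_comp, Category.assoc, adj.counit_natural, ← Category.assoc, adj.left_triangle]

theorem unit_comp_map_map_comp_counit {X : C} {Y : D} (g : X ⟶ G.obj Y) :
    adj.unit X ≫ G.map (F.map g ≫ adj.counit Y) = g ≫ G.map (𝟙 Y) := by
  rw [G.map_comp, ← Category.assoc, ← adj.unit_natural, Category.assoc, adj.right_triangle]

theorem map_comp_unit_comp_counit {W X : C} (u : W ⟶ X) :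
    F.map (u ≫ adj.unit X) ≫ adj.counit (F.obj X) = F.map u := by
  rw [adj.unit_natural, adj.map_unit_comp_map_comp_counit, F.map_id_comp_map]

theorem unit_comp_map_counit_comp {Y Z : D} (u : Y ⟶ Z) :
    adj.unit (G.obj Y) ≫ G.map (adj.counit Y ≫ u) = G.map u := by
  rw [← adj.counit_natural, adj.unit_comp_map_map_comp_counit, G.map_comp_map_id]

theorem faithful_left_iff_mono_unit : F.Faithful ↔ ∀ X : C, Mono (adj.unit X) := by
  constructor
  · intro hF X
    refine ⟨fun u v h => hF u v ?_⟩
    rw [← adj.map_comp_unit_comp_counit u, h, adj.map_comp_unit_comp_counit]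
  · intro hη X Y f g h
    refine (hη Y).right_cancellation f g ?_
    rw [adj.unit_natural, adj.unit_natural, h]

theorem faithful_right_iff_epi_counit : G.Faithful ↔ ∀ Y : D, Epi (adj.counit Y) := by
  constructor
  · intro hG Y
    refine ⟨fun u v h => hG u v ?_⟩
    rw [← adj.unit_comp_map_counit_comp u, h, adj.unit_comp_map_counit_comp]
  · intro hε X Y f g h
    refine (hε X).left_cancellation f g ?_
    rw [← adj.counit_natural, ← adj.counit_natural, h]

theorem semifull_left_iff : F.Semifull ↔ ∀ X : C, ∃ ν : G.obj (F.obj X) ⟶ X,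
    ν ≫ adj.unit X = G.map (F.map (𝟙 X)) := by
  constructor
  · intro hF X
    obtain ⟨ν, hν⟩ := hF (adj.counit (F.obj X))
    refine ⟨ν, ?_⟩
    calc ν ≫ adj.unit X = adj.unit _ ≫ G.map (F.map ν) := adj.unit_natural ν
      _ = adj.unit _ ≫ G.map ((F.map (𝟙 _) ≫ adj.counit _) ≫ F.map (𝟙 X)) := by
        rw [hν, Category.assoc]
      _ = G.map (F.map (𝟙 X)) := by
        rw [G.map_comp, ← Category.assoc, adj.unit_comp_map_map_comp_counit, Category.id_comp,
          G.map_id_comp_map]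
  · intro hν X Y f
    obtain ⟨ν, hνY⟩ := hν Y
    refine ⟨adj.unit X ≫ G.map f ≫ ν, ?_⟩
    rw [← adj.map_comp_unit_comp_counit, Category.assoc, Category.assoc, hνY, ← G.map_comp,
      adj.map_unit_comp_map_comp_counit]

theorem semifull_right_iff : G.Semifull ↔ ∀ Y : D, ∃ γ : Y ⟶ F.obj (G.obj Y),
    adj.counit Y ≫ γ = F.map (G.map (𝟙 Y)) := by
  constructor
  · intro hG Y
    obtain ⟨γ, hγ⟩ := hG (adj.unit (G.obj Y))
    refine ⟨γ, ?_⟩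
    calc adj.counit Y ≫ γ = F.map (G.map γ) ≫ adj.counit _ := (adj.counit_natural γ).symm
      _ = F.map (G.map (𝟙 Y)) ≫ F.map (adj.unit _ ≫ G.map (𝟙 _)) ≫ adj.counit _ := by
        rw [hγ, F.map_comp, Category.assoc]
      _ = F.map (G.map (𝟙 Y)) := by
        rw [adj.map_unit_comp_map_comp_counit, Category.comp_id, F.map_comp_map_id]
  · intro hγ X Y f
    obtain ⟨γ, hγX⟩ := hγ X
    refine ⟨γ ≫ F.map f ≫ adj.counit Y, ?_⟩
    rw [← adj.unit_comp_map_counit_comp, ← Category.assoc, hγX, ← Category.assoc,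
      ← F.map_comp, adj.unit_comp_map_map_comp_counit, Category.assoc]

end Semiadjunction

/-- Characterization of faithfulness and semifullness for semiadjoint semifunctors:
`F` is faithful iff each `η_C` is a monomorphism; `F` is semifull iff each `η_C` is a
`C`-semisplit-epi; `G` is faithful iff each `ε_D` is an epimorphism; `G` is semifull
iff each `ε_D` is a `D`-semisplit-mono. -/
theorem semiadjunction_faithful_semifull_char
    {C : Type u₁} {D : Type u₂} [Category.{v₁} C] [Category.{v₂} D]
    {F : Semifunctor C D} {G : Semifunctor D C} (adj : Semiadjunction F G) :
    (F.Faithful ↔ ∀ X : C, Mono (adj.unit X)) ∧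
    (F.Semifull ↔ ∀ X : C, ∃ ν : G.obj (F.obj X) ⟶ X,
      ν ≫ adj.unit X = G.map (F.map (𝟙 X))) ∧
    (G.Faithful ↔ ∀ Y : D, Epi (adj.counit Y)) ∧
    (G.Semifull ↔ ∀ Y : D, ∃ γ : Y ⟶ F.obj (G.obj Y),
      adj.counit Y ≫ γ = F.map (G.map (𝟙 Y))) := by
  exact ⟨adj.faithful_left_iff_mono_unit, adj.semifull_left_iff,
    adj.faithful_right_iff_epi_counit, adj.semifull_right_iff⟩
end

section
/- Let e : Id_C → Id_C be an idempotent seminatural transformation on a category C and let E^e : C → C be the canonical semifunctor (identity on objects, f ↦ f ∘ e_X). Then E^e is a separable semifunctor if and only if e_X = Id_X for every object X of C. -/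
open CategoryTheory

universe v₁ v₂ v₃ v₄ u₁ u₂ u₃ u₄

open Semifunctor

/- A separable semifunctor is faithful, since its retraction `P` undoes it on hom-sets.
Idempotency of `e` gives `E^e(e_X) = e_X ≫ e_X = e_X = E^e(𝟙_X)`, so faithfulness forces
`e_X = 𝟙_X`. Conversely, if `e` is the identity then `E^e` is the identity on morphisms and
`P(k) = k` is a natural retraction. -/

namespace Semifunctor

variable {C : Type u₁} {D : Type u₂} [Category.{v₁} C] [Category.{v₂} D]

theorem Separable.faithful {F : Semifunctor C D} (hF : F.Separable) : F.Faithful := by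
  obtain ⟨P, -, hP⟩ := hF
  intro X Y f g hfg
  rw [← hP X Y f, ← hP X Y g, hfg]

end Semifunctor

section canonicalSemifunctor

variable {C : Type u₁} [Category.{v₁} C] {e : ∀ X : C, X ⟶ X}
  {hnat : ∀ ⦃X Y : C⦄ (f : X ⟶ Y), f ≫ e Y = e X ≫ f} {hid : ∀ X : C, e X ≫ e X = e X}

theorem canonicalSemifunctor_map_app (X : C) :
    (canonicalSemifunctor e hnat hid).map (e X) = (canonicalSemifunctor e hnat hid).map (𝟙 X) := by
  show e X ≫ e X = e X ≫ 𝟙 X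
  rw [hid, Category.comp_id]

theorem canonicalSemifunctor_separable_of_eq_id (he : ∀ X : C, e X = 𝟙 X) :
    (canonicalSemifunctor e hnat hid).Separable := by
  refine ⟨fun _ _ k => k, ?natural, ?retraction⟩
  case natural =>
    intro X Y Z _ h (k : Y ⟶ Z) l
    show (e X ≫ h) ≫ k ≫ e Z ≫ l = h ≫ k ≫ l
    rw [he, he, Category.id_comp, Category.id_comp]
  case retraction =>
    intro X _ f
    show e X ≫ f = f
    rw [he, Category.id_comp]

end canonicalSemifunctor

/-- The canonical semifunctor `E^e` attached to an idempotent seminatural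
transformation `e : Id_C → Id_C` is separable iff `e_X = Id_X` for every `X`. -/
theorem canonicalSemifunctor_separable_iff
    {C : Type u₁} [Category.{v₁} C] (e : ∀ X : C, X ⟶ X)
    (hnat : ∀ ⦃X Y : C⦄ (f : X ⟶ Y), f ≫ e Y = e X ≫ f)
    (hid : ∀ X : C, e X ≫ e X = e X) :
    (canonicalSemifunctor e hnat hid).Separable ↔ ∀ X : C, e X = 𝟙 X := by
  exact ⟨fun hsep X => hsep.faithful _ _ (canonicalSemifunctor_map_app X),
    canonicalSemifunctor_separable_of_eq_id⟩
end

section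
/- Let F : C → D be a semifunctor. Then: (i) F is separable if and only if F is semiseparable and faithful; (ii) F is naturally semifull if and only if F is semiseparable and semifull. -/
open CategoryTheory

universe v₁ v₂ v₃ v₄ u₁ u₂ u₃ u₄

open Semifunctor

/-! All four implications use one and the same natural `P`. Faithfulness turns
`F(P(F f)) = F f` into `P(F f) = f`. Semifullness gives, for `f : FX ⟶ FY`, some `g` with
`F g = F(𝟙) ≫ f ≫ F(𝟙)`; naturality of `P` gives `P f = P(F(𝟙) ≫ f ≫ F(𝟙)) = P(F g)`, so
semiseparability yields `F(P f) = F g = F(𝟙) ≫ f ≫ F(𝟙)`. -/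

namespace Semifunctor

variable {C : Type u₁} {D : Type u₂} [Category.{v₁} C] [Category.{v₂} D] {F : Semifunctor C D}

theorem map_id_comp_map_comp_map_id {X Y : C} (g : X ⟶ Y) :
    F.map (𝟙 X) ≫ F.map g ≫ F.map (𝟙 Y) = F.map g := by
  rw [← F.map_comp, ← F.map_comp, Category.id_comp, Category.comp_id]

theorem IsHomNatural.apply_map_id_comp_comp_map_id
    {P : ∀ X Y : C, (F.obj X ⟶ F.obj Y) → (X ⟶ Y)} (hP : F.IsHomNatural P)
    {X Y : C} (f : F.obj X ⟶ F.obj Y) :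
    P X Y (F.map (𝟙 X) ≫ f ≫ F.map (𝟙 Y)) = P X Y f := by
  rw [hP, Category.id_comp, Category.comp_id]

theorem Separable.semiseparable (hF : F.Separable) : F.Semiseparable := by
  obtain ⟨P, hP, hret⟩ := hF
  exact ⟨P, hP, fun X Y f => by rw [hret]⟩

theorem Separable.faithful_s17 (hF : F.Separable) : F.Faithful := by
  obtain ⟨P, -, hret⟩ := hF
  intro X Y f g hfg
  rw [← hret X Y f, ← hret X Y g, hfg]

theorem Semiseparable.separable (hF : F.Semiseparable) (hfaith : F.Faithful) : F.Separable := by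
  obtain ⟨P, hP, hsemi⟩ := hF
  exact ⟨P, hP, fun X Y f => hfaith _ _ (hsemi X Y f)⟩

theorem NaturallySemifull.semiseparable (hF : F.NaturallySemifull) : F.Semiseparable := by
  obtain ⟨P, hP, hfull⟩ := hF
  exact ⟨P, hP, fun X Y f => by rw [hfull, map_id_comp_map_comp_map_id]⟩

theorem NaturallySemifull.semifull (hF : F.NaturallySemifull) : F.Semifull := by
  obtain ⟨P, -, hfull⟩ := hF
  exact fun X Y f => ⟨P X Y f, hfull X Y f⟩

theorem Semiseparable.naturallySemifull (hF : F.Semiseparable) (hfull : F.Semifull) :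
    F.NaturallySemifull := by
  obtain ⟨P, hP, hsemi⟩ := hF
  refine ⟨P, hP, fun X Y f => ?_⟩
  obtain ⟨g, hg⟩ := hfull f
  have hPf : P X Y f = P X Y (F.map g) := by
    rw [hg, hP.apply_map_id_comp_comp_map_id]
  rw [hPf, hsemi, hg]

end Semifunctor

/-- (i) A semifunctor is separable iff it is semiseparable and faithful;
(ii) it is naturally semifull iff it is semiseparable and semifull. -/
theorem separable_and_naturallySemifull_via_semiseparable
    {C : Type u₁} {D : Type u₂} [Category.{v₁} C] [Category.{v₂} D]
    (F : Semifunctor C D) :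
    (F.Separable ↔ F.Semiseparable ∧ F.Faithful) ∧
    (F.NaturallySemifull ↔ F.Semiseparable ∧ F.Semifull) :=
  ⟨⟨fun hF => ⟨hF.semiseparable, hF.faithful_s17⟩, fun ⟨hF, hfaith⟩ => hF.separable hfaith⟩,
    ⟨fun hF => ⟨hF.semiseparable, hF.semifull⟩, fun ⟨hF, hfull⟩ => hF.naturallySemifull hfull⟩⟩
end
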